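/- Fix n, ℓ ≥ 1 and let O be the ELU ontology {A ⊑ B₁ ⊔ B₂, ∃r.B₂ ⊑ ∃r.(B₁ ⊓ L), L ⊑ A₁ ⊓ Â₁ ⊓ ⋯ ⊓ Aₙ ⊓ Âₙ ⊓ ∃r₁.L ⊓ ∃r₂.L}. If O_T is any ℓ-bounded EL approximation of O (an EL ontology, possibly using fresh symbols, such that for all EL concepts C, D over sig(O) of depth ≤ ℓ, O ⊨ C ⊑ D iff O_T ⊨ C ⊑ D), then ||O_T|| ≥ tower(ℓ, n), where tower(0,n) = n and tower(k+1,n) = 2^tower(k,n). -/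

import Mathlib

namespace DL

/- Basic description-logic framework: concepts, interpretations, ontologies. -/

inductive Concept (Cn R : Type) : Type where
  | top  : Concept Cn R
  | bot  : Concept Cn R
  | name : Cn → Concept Cn R
  | neg  : Concept Cn R → Concept Cn R
  | conj : Concept Cn R → Concept Cn R → Concept Cn R
  | disj : Concept Cn R → Concept Cn R → Concept Cn R
  | ex   : R → Concept Cn R → Concept Cn R
  | all  : R → Concept Cn R → Concept Cn R
  deriving DecidableEq

namespace Concept
variable {Cn R : Type}

/-- `EL` concepts: only ⊤, concept names, ⊓ and ∃r.C. -/
def isEL : Concept Cn R → Prop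
  | top => True
  | bot => False
  | name _ => True
  | neg _ => False
  | conj c d => c.isEL ∧ d.isEL
  | disj _ _ => False
  | ex _ c => c.isEL
  | all _ _ => False

/-- `ELU` concepts: additionally allow ⊔. -/
def isELU : Concept Cn R → Prop
  | top => True
  | bot => False
  | name _ => True
  | neg _ => False
  | conj c d => c.isELU ∧ d.isELU
  | disj c d => c.isELU ∧ d.isELU
  | ex _ c => c.isELU
  | all _ _ => False

/-- `EL⊥` concepts. -/
def isELbot : Concept Cn R → Prop
  | top => True
  | bot => True
  | name _ => True
  | neg _ => False
  | conj c d => c.isELbot ∧ d.isELbot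
  | disj _ _ => False
  | ex _ c => c.isELbot
  | all _ _ => False

/-- `ELU⊥` concepts. -/
def isELUbot : Concept Cn R → Prop
  | top => True
  | bot => True
  | name _ => True
  | neg _ => False
  | conj c d => c.isELUbot ∧ d.isELUbot
  | disj c d => c.isELUbot ∧ d.isELUbot
  | ex _ c => c.isELUbot
  | all _ _ => False

/-- the nesting depth of ∃/∀ restrictions. -/
def depth : Concept Cn R → ℕ
  | top => 0
  | bot => 0
  | name _ => 0
  | neg c => c.depth
  | conj c d => max c.depth d.depth
  | disj c d => max c.depth d.depth
  | ex _ c => c.depth + 1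
  | all _ c => c.depth + 1

/-- size of a concept (occurrences of symbols). -/
def size : Concept Cn R → ℕ
  | top => 1
  | bot => 1
  | name _ => 1
  | neg c => c.size + 1
  | conj c d => c.size + d.size + 1
  | disj c d => c.size + d.size + 1
  | ex _ c => c.size + 2
  | all _ c => c.size + 2

/-- set of subconcepts. -/
def sub : Concept Cn R → Set (Concept Cn R)
  | top => {top}
  | bot => {bot}
  | name A => {name A}
  | neg c => insert (neg c) c.sub
  | conj c d => insert (conj c d) (c.sub ∪ d.sub)
  | disj c d => insert (disj c d) (c.sub ∪ d.sub)
  | ex r c => insert (ex r c) c.sub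
  | all r c => insert (all r c) c.sub

/-- concept names occurring in a concept. -/
def names : Concept Cn R → Set Cn
  | top => ∅
  | bot => ∅
  | name A => {A}
  | neg c => c.names
  | conj c d => c.names ∪ d.names
  | disj c d => c.names ∪ d.names
  | ex _ c => c.names
  | all _ c => c.names

/-- role names occurring in a concept. -/
def roles : Concept Cn R → Set R
  | top => ∅
  | bot => ∅
  | name _ => ∅
  | neg c => c.roles
  | conj c d => c.roles ∪ d.roles
  | disj c d => c.roles ∪ d.roles
  | ex r c => insert r c.roles
  | all r c => insert r c.roles

/-- top-level conjuncts of a concept. -/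
def tlConj : Concept Cn R → Set (Concept Cn R)
  | conj c d => c.tlConj ∪ d.tlConj
  | c => {c}

end Concept

/-- n-fold nesting of ∃r applied to a concept. -/
def exN {Cn R : Type} (r : R) : ℕ → Concept Cn R → Concept Cn R
  | 0, c => c
  | n + 1, c => Concept.ex r (exN r n c)

/-- An interpretation: a domain together with extensions of concept and role names. -/
structure Interp (Cn R : Type) : Type 1 where
  Dom : Type
  cI : Cn → Set Dom
  rI : R → Set (Dom × Dom)

/-- Semantics of concepts. -/
def Interp.interp {Cn R : Type} (I : Interp Cn R) : Concept Cn R → Set I.Dom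
  | .top => Set.univ
  | .bot => ∅
  | .name A => I.cI A
  | .neg c => (I.interp c)ᶜ
  | .conj c d => I.interp c ∩ I.interp d
  | .disj c d => I.interp c ∪ I.interp d
  | .ex r c => {x | ∃ y, (x, y) ∈ I.rI r ∧ y ∈ I.interp c}
  | .all r c => {x | ∀ y, (x, y) ∈ I.rI r → y ∈ I.interp c}

/-- An ontology: a set of concept inclusions `C ⊑ D`, coded as pairs `(C, D)`. -/
abbrev Ontology (Cn R : Type) := Set (Concept Cn R × Concept Cn R)

/-- `I` is a model of the ontology `O`. -/
def Interp.isModel {Cn R : Type} (I : Interp Cn R) (O : Ontology Cn R) : Prop :=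
  ∀ ci ∈ O, I.interp ci.1 ⊆ I.interp ci.2

/-- `O ⊨ c ⊑ d`. -/
def entails {Cn R : Type} (O : Ontology Cn R) (c d : Concept Cn R) : Prop :=
  ∀ I : Interp Cn R, I.isModel O → I.interp c ⊆ I.interp d

/-- logical equivalence (w.r.t. the empty ontology). -/
def lequiv {Cn R : Type} (c d : Concept Cn R) : Prop :=
  entails ∅ c d ∧ entails ∅ d c

/-- set of subconcepts of an ontology. -/
def subO {Cn R : Type} (O : Ontology Cn R) : Set (Concept Cn R) :=
  {F | ∃ ci ∈ O, F ∈ ci.1.sub ∪ ci.2.sub}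

/-- concept names of an ontology. -/
def sigC {Cn R : Type} (O : Ontology Cn R) : Set Cn :=
  {A | ∃ ci ∈ O, A ∈ ci.1.names ∪ ci.2.names}

/-- role names of an ontology. -/
def sigR {Cn R : Type} (O : Ontology Cn R) : Set R :=
  {r | ∃ ci ∈ O, r ∈ ci.1.roles ∪ ci.2.roles}


/- STATEMENT 17: non-elementary lower bound on the size of ℓ-bounded EL approximations
   of Oⁿ = {A ⊑ B₁ ⊔ B₂, ∃r.B₂ ⊑ ∃r.(B₁ ⊓ L),
            L ⊑ A₁ ⊓ Â₁ ⊓ ⋯ ⊓ Aₙ ⊓ Âₙ ⊓ ∃r₁.L ⊓ ∃r₂.L}. -/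

/-- tower of exponentials. -/
def tower : ℕ → ℕ → ℕ
  | 0, n => n
  | k + 1, n => 2 ^ tower k n

/-- conjunction of a list of concepts. -/
def bigConj {Cn R : Type} (l : List (Concept Cn R)) : Concept Cn R :=
  l.foldr Concept.conj Concept.top

/-- renaming of concept and role names. -/
def Concept.rename {Cn Cn' R R' : Type} (f : Cn → Cn') (g : R → R') :
    Concept Cn R → Concept Cn' R'
  | .top => .top
  | .bot => .bot
  | .name A => .name (f A)
  | .neg c => .neg (c.rename f g)
  | .conj c d => .conj (c.rename f g) (d.rename f g)
  | .disj c d => .disj (c.rename f g) (d.rename f g)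
  | .ex r c => .ex (g r) (c.rename f g)
  | .all r c => .all (g r) (c.rename f g)

-- concept names: A = 0, B₁ = 1, B₂ = 2, L = 3, Aᵢ = 4 + 2i, Âᵢ = 5 + 2i (0 ≤ i < n);
-- role names: r = 0, r₁ = 1, r₂ = 2
def cL : Concept ℕ ℕ := .name 3

/-- the source ontology Oⁿ of Proposition 3. -/
def O₁₇ (n : ℕ) : Ontology ℕ ℕ :=
  {(.name 0, .disj (.name 1) (.name 2)),
   (.ex 0 (.name 2), .ex 0 (.conj (.name 1) cL)),
   (cL, .conj
      (bigConj ((List.range n).flatMap fun i => [.name (4 + 2 * i), .name (5 + 2 * i)]))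
      (.conj (.ex 1 cL) (.ex 2 cL)))}

/-- the signature of Oⁿ. -/
def srcNames (n : ℕ) : Set ℕ := {m | m < 4 + 2 * n}
def srcRoles : Set ℕ := {0, 1, 2}

/-!
Each `E ∈ Ω` (a family of `tower ℓ n` pairwise `O`-incomparable concepts of depth `ℓ - 1`, all
implied by `L`) satisfies `O ⊨ ∃r.(A ⊓ E) ⊑ ∃r.(B₁ ⊓ E)`: split on `A ⊑ B₁ ⊔ B₂`, and in the
`B₂` case the `L`-successor supplies `E`. On the other hand `O ⊭ A ⊓ E ⊑ B₁ ⊓ E` and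
`O ⊭ ∃r.(A ⊓ E) ⊑ ∃r.(B₁ ⊓ E')` for `E' ≠ E`, as a model whose elements are concepts shows.
The approximation `O_T` inherits all three facts. As `O_T` is `EL`, its canonical model, with
successors restricted to subconcepts, turns the entailment into an interpolant `∃r.D'` between
`∃r.(A ⊓ E)` and `∃r.(B₁ ⊓ E)` that is a subconcept of `O_T` (it cannot be `∃r.(A ⊓ E)` itself
by the second fact). By the third fact distinct `E` have distinct interpolants, and `‖O_T‖`
bounds the number of subconcepts of `O_T`.
-/

section Entailment
variable {Cn R : Type} {O : Ontology Cn R} {c d e : Concept Cn R}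

theorem entails_refl (O : Ontology Cn R) (c : Concept Cn R) : entails O c c :=
  fun _ _ => subset_rfl

theorem entails_trans (h₁ : entails O c d) (h₂ : entails O d e) : entails O c e :=
  fun I hI => (h₁ I hI).trans (h₂ I hI)

theorem entails_conj (h₁ : entails O c d) (h₂ : entails O c e) : entails O c (.conj d e) :=
  fun I hI _ hx => ⟨h₁ I hI hx, h₂ I hI hx⟩

theorem entails_conj_left (O : Ontology Cn R) (d e : Concept Cn R) :
    entails O (.conj d e) d :=
  fun _ _ _ hx => hx.1

theorem entails_conj_right (O : Ontology Cn R) (d e : Concept Cn R) :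
    entails O (.conj d e) e :=
  fun _ _ _ hx => hx.2

theorem entails_ex (r : R) (h : entails O c d) : entails O (.ex r c) (.ex r d) := by
  rintro I hI x ⟨y, hxy, hy⟩
  exact ⟨y, hxy, h I hI hy⟩

theorem entails_of_mem {ci : Concept Cn R × Concept Cn R} (h : ci ∈ O) : entails O ci.1 ci.2 :=
  fun _ hI => hI ci h

end Entailment

section BigConj
variable {Cn R : Type}

theorem mem_interp_bigConj (I : Interp Cn R) (l : List (Concept Cn R)) (x : I.Dom) :
    x ∈ I.interp (bigConj l) ↔ ∀ c ∈ l, x ∈ I.interp c := by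
  induction l with
  | nil => simp [bigConj, Interp.interp]
  | cons c l ih => simp [bigConj, Interp.interp, ← ih]

theorem mem_tlConj_bigConj {l : List (Concept Cn R)} {d : Concept Cn R} :
    d ∈ (bigConj l).tlConj ↔ d = .top ∨ ∃ c ∈ l, d ∈ c.tlConj := by
  induction l with
  | nil => exact ⟨Or.inl, fun h => h.elim id (by simp)⟩
  | cons c l ih =>
    change d ∈ c.tlConj ∪ (bigConj l).tlConj ↔ _
    rw [Set.mem_union, ih]
    simp only [List.mem_cons, exists_eq_or_imp]
    tauto

end BigConj

namespace Concept
variable {Cn R : Type}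

theorem mem_sub_self (c : Concept Cn R) : c ∈ c.sub := by
  cases c <;> simp [sub]

theorem sub_subset_of_mem_sub {c d : Concept Cn R} (h : d ∈ c.sub) : d.sub ⊆ c.sub := by
  induction c with
  | top | bot | name => rw [Set.mem_singleton_iff.mp h]
  | neg c ih | ex _ c ih | all _ c ih =>
    rcases h with rfl | h
    · rfl
    · exact (ih h).trans (Set.subset_insert _ _)
  | conj c c' ih ih' | disj c c' ih ih' =>
    rcases h with rfl | h | h
    · rfl
    · exact (ih h).trans (Set.subset_union_left.trans (Set.subset_insert _ _))
    · exact (ih' h).trans (Set.subset_union_right.trans (Set.subset_insert _ _))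

theorem finite_sub (c : Concept Cn R) : c.sub.Finite := by
  induction c with
  | top | bot | name => exact Set.finite_singleton _
  | neg c ih | ex _ c ih | all _ c ih => exact ih.insert _
  | conj c c' ih ih' | disj c c' ih ih' => exact (ih.union ih').insert _

theorem ncard_sub_le_size (c : Concept Cn R) : c.sub.ncard ≤ c.size := by
  induction c with
  | top | bot | name => simp [sub, size]
  | neg c ih | ex _ c ih | all _ c ih =>
    simp only [sub, size]
    exact (Set.ncard_insert_le _ _).trans (by omega)
  | conj c c' ih ih' | disj c c' ih ih' =>
    simp only [sub, size]
    have := Set.ncard_union_le c.sub c'.sub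
    exact (Set.ncard_insert_le _ _).trans (by omega)

theorem mem_roles_of_ex_mem_sub {r : R} {c d : Concept Cn R} (h : ex r d ∈ c.sub) :
    r ∈ c.roles := by
  induction c with
  | top | bot | name => simp [sub] at h
  | neg c ih => exact ih (h.resolve_left (by simp))
  | ex s c ih | all s c ih =>
    rcases h with h | h
    · cases h <;> exact Set.mem_insert _ _
    · exact Set.mem_insert_of_mem _ (ih h)
  | conj c c' ih ih' | disj c c' ih ih' =>
    rcases h with h | h | h
    · cases h
    · exact Or.inl (ih h)
    · exact Or.inr (ih' h)

variable {Cn' R' : Type} {f : Cn → Cn'} {g : R → R'}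

theorem isEL_rename {c : Concept Cn R} (h : c.isEL) : (c.rename f g).isEL := by
  induction c with
  | top | name => trivial
  | bot | neg | disj | all => exact h.elim
  | conj c c' ih ih' => exact ⟨ih h.1, ih' h.2⟩
  | ex _ c ih => exact ih h

theorem roles_rename (c : Concept Cn R) : (c.rename f g).roles = g '' c.roles := by
  induction c with
  | top | bot | name => simp [rename, roles]
  | neg c ih => exact ih
  | ex _ c ih | all _ c ih => simp [rename, roles, ih, Set.image_insert_eq]
  | conj c c' ih ih' | disj c c' ih ih' => simp [rename, roles, ih, ih', Set.image_union]

end Concept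

section Subconcepts
variable {Cn R : Type}

theorem subO_eq_biUnion {O : Ontology Cn R} (hO : O.Finite) :
    subO O = ⋃ ci ∈ hO.toFinset, (ci.1.sub ∪ ci.2.sub) := by
  ext F
  simp [subO]

theorem finite_subO {O : Ontology Cn R} (hO : O.Finite) : (subO O).Finite := by
  rw [subO_eq_biUnion hO]
  exact Set.Finite.biUnion (Finset.finite_toSet _)
    fun ci _ => ci.1.finite_sub.union ci.2.finite_sub

theorem ncard_subO_le {O : Ontology Cn R} (hO : O.Finite) :
    (subO O).ncard ≤ ∑ ci ∈ hO.toFinset, (ci.1.size + ci.2.size) := by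
  rw [subO_eq_biUnion hO]
  refine (Finset.set_ncard_biUnion_le _ _).trans (Finset.sum_le_sum fun ci _ => ?_)
  have := Set.ncard_union_le ci.1.sub ci.2.sub
  have := ci.1.ncard_sub_le_size
  have := ci.2.ncard_sub_le_size
  omega

theorem sub_subset_subO {O : Ontology Cn R} {c : Concept Cn R} (h : c ∈ subO O) :
    c.sub ⊆ subO O := by
  obtain ⟨ci, hci, h | h⟩ := h
  · exact fun d hd => ⟨ci, hci, Or.inl (Concept.sub_subset_of_mem_sub h hd)⟩
  · exact fun d hd => ⟨ci, hci, Or.inr (Concept.sub_subset_of_mem_sub h hd)⟩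

end Subconcepts

section CanonicalModel
variable {N ρ : Type} {OT : Ontology N ρ} {S : Set (Concept N ρ)}

/-- Successors are restricted to `S` so that every witness of an existential restriction
comes from `S`: this is what locates interpolants among the subconcepts of `OT`. -/
def canon (OT : Ontology N ρ) (S : Set (Concept N ρ)) : Interp N ρ where
  Dom := Concept N ρ
  cI A := {D | entails OT D (.name A)}
  rI s := {p | entails OT p.1 (.ex s p.2) ∧ .ex s p.2 ∈ S}

theorem entails_of_mem_canon {G : Concept N ρ} (hG : G.isEL) {D : Concept N ρ}
    (hD : D ∈ (canon OT S).interp G) : entails OT D G := by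
  induction G generalizing D with
  | top => exact fun _ _ _ _ => trivial
  | name => exact hD
  | bot | neg | disj | all => exact hG.elim
  | conj G G' ih ih' => exact entails_conj (ih hG.1 hD.1) (ih' hG.2 hD.2)
  | ex r G ih =>
    obtain ⟨D', ⟨hDD', -⟩, hD'⟩ := hD
    exact entails_trans hDD' (entails_ex r (ih hG hD'))

theorem mem_canon_of_entails (hS : ∀ c ∈ S, c.sub ⊆ S) {G : Concept N ρ} (hG : G.isEL)
    (hGS : G ∈ S) {D : Concept N ρ} (hD : entails OT D G) : D ∈ (canon OT S).interp G := by
  induction G generalizing D with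
  | top => trivial
  | name => exact hD
  | bot | neg | disj | all => exact hG.elim
  | conj G G' ih ih' =>
    have hsub := hS _ hGS
    exact ⟨ih hG.1 (hsub (Or.inr (Or.inl G.mem_sub_self)))
        (entails_trans hD (entails_conj_left _ _ _)),
      ih' hG.2 (hsub (Or.inr (Or.inr G'.mem_sub_self)))
        (entails_trans hD (entails_conj_right _ _ _))⟩
  | ex r G ih =>
    exact ⟨G, ⟨hD, hGS⟩, ih hG (hS _ hGS (Or.inr G.mem_sub_self)) (entails_refl OT G)⟩

theorem canon_isModel (hS : ∀ c ∈ S, c.sub ⊆ S) (hEL : ∀ ci ∈ OT, ci.1.isEL ∧ ci.2.isEL)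
    (hOT : ∀ ci ∈ OT, ci.2 ∈ S) : (canon OT S).isModel OT := fun ci hci _ hx =>
  mem_canon_of_entails hS (hEL ci hci).2 (hOT ci hci)
    (entails_trans (entails_of_mem_canon (hEL ci hci).1 hx) (entails_of_mem hci))

theorem entails_or_exists_mem_subO_of_entails_ex (hEL : ∀ ci ∈ OT, ci.1.isEL ∧ ci.2.isEL)
    {r : ρ} {C D : Concept N ρ} (hC : C.isEL) (hD : D.isEL) (hr : r ∉ C.roles)
    (h : entails OT (.ex r C) (.ex r D)) :
    entails OT C D ∨ ∃ F ∈ subO OT, entails OT (.ex r C) F ∧ entails OT F (.ex r D) := by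
  set S := subO OT ∪ (Concept.ex r C).sub
  have hS : ∀ c ∈ S, c.sub ⊆ S := by
    rintro c (hc | hc)
    · exact (sub_subset_subO hc).trans Set.subset_union_left
    · exact (Concept.sub_subset_of_mem_sub hc).trans Set.subset_union_right
  have hmodel : (canon OT S).isModel OT :=
    canon_isModel hS hEL fun ci hci => Or.inl ⟨ci, hci, Or.inr ci.2.mem_sub_self⟩
  have hCC : Concept.ex r C ∈ (canon OT S).interp (.ex r C) :=
    mem_canon_of_entails (G := .ex r C) hS hC (Or.inr (Concept.mem_sub_self _))
      (entails_refl OT _)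
  obtain ⟨D', ⟨hCD', hD'S⟩, hD'⟩ := h _ hmodel hCC
  have hD'D : entails OT D' D := entails_of_mem_canon hD hD'
  rcases hD'S with hD'S | hD'C | hD'S
  · exact Or.inr ⟨_, hD'S, hCD', entails_ex r hD'D⟩
  · have hD'C : D' = C := (Concept.ex.inj hD'C).2
    exact Or.inl (hD'C ▸ hD'D)
  · exact absurd (Concept.mem_roles_of_ex_mem_sub hD'S) hr

theorem card_le_ncard_subO {ι : Type} {s : Finset ι} {C D : ι → Concept N ρ} (hOT : OT.Finite)
    (hsep : ∀ i ∈ s, ∀ j ∈ s, entails OT (C i) (D j) → i = j)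
    (hF : ∀ i ∈ s, ∃ F ∈ subO OT, entails OT (C i) F ∧ entails OT F (D i)) :
    s.card ≤ (subO OT).ncard := by
  have : Nonempty (Concept N ρ) := ⟨.top⟩
  choose! F hFO hCF hFD using hF
  rw [← Set.ncard_coe_finset]
  refine Set.ncard_le_ncard_of_injOn F hFO (fun i hi j hj hij => ?_) (finite_subO hOT)
  exact hsep i hi j hj (entails_trans (hCF i hi) (hij ▸ hFD j hj))

end CanonicalModel

namespace Concept
variable {Cn R : Type} {cs : Set Cn} {rs : Set R} {k : ℕ} {c d : Concept Cn R}

def IsELOver (cs : Set Cn) (rs : Set R) (k : ℕ) (c : Concept Cn R) : Prop :=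
  c.isEL ∧ c.names ⊆ cs ∧ c.roles ⊆ rs ∧ c.depth ≤ k

theorem isELOver_top : (top : Concept Cn R).IsELOver cs rs k :=
  ⟨trivial, Set.empty_subset _, Set.empty_subset _, Nat.zero_le _⟩

theorem isELOver_name {A : Cn} (hA : A ∈ cs) : (name A : Concept Cn R).IsELOver cs rs k :=
  ⟨trivial, Set.singleton_subset_iff.mpr hA, Set.empty_subset _, Nat.zero_le _⟩

theorem IsELOver.conj (hc : c.IsELOver cs rs k) (hd : d.IsELOver cs rs k) :
    (conj c d).IsELOver cs rs k :=
  ⟨⟨hc.1, hd.1⟩, Set.union_subset hc.2.1 hd.2.1, Set.union_subset hc.2.2.1 hd.2.2.1,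
    max_le hc.2.2.2 hd.2.2.2⟩

theorem IsELOver.ex {r : R} (hr : r ∈ rs) (hc : c.IsELOver cs rs k) :
    (ex r c).IsELOver cs rs (k + 1) :=
  ⟨hc.1, hc.2.1, Set.insert_subset hr hc.2.2.1, Nat.succ_le_succ hc.2.2.2⟩

theorem IsELOver.mono {rs' : Set R} {k' : ℕ} (hrs : rs ⊆ rs') (hk : k ≤ k')
    (hc : c.IsELOver cs rs k) : c.IsELOver cs rs' k' :=
  ⟨hc.1, hc.2.1, hc.2.2.1.trans hrs, hc.2.2.2.trans hk⟩

end Concept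

section ChoiceConj
variable {Cn R α : Type} [DecidableEq α]

theorem isELOver_bigConj {cs : Set Cn} {rs : Set R} {k : ℕ} {l : List (Concept Cn R)}
    (h : ∀ c ∈ l, c.IsELOver cs rs k) : (bigConj l).IsELOver cs rs k := by
  induction l with
  | nil => exact Concept.isELOver_top
  | cons c l ih => exact (h c List.mem_cons_self).conj (ih fun d hd => h d (.tail c hd))

noncomputable def choiceConj (s : Finset α) (p q : α → Concept Cn R) (S : Finset α) :
    Concept Cn R :=
  bigConj (s.toList.map fun a => if a ∈ S then p a else q a)

variable {s S T : Finset α} {p q : α → Concept Cn R}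

theorem mem_interp_choiceConj {I : Interp Cn R} {x : I.Dom} :
    x ∈ I.interp (choiceConj s p q T) ↔ ∀ a ∈ s, x ∈ I.interp (if a ∈ T then p a else q a) := by
  simp [choiceConj, mem_interp_bigConj]

theorem mem_interp_choiceConj_iff {I : Interp Cn R} {x : I.Dom} (hS : S ⊆ s) (hT : T ⊆ s)
    (hx : ∀ a ∈ s, (x ∈ I.interp (p a) ↔ a ∈ S) ∧ (x ∈ I.interp (q a) ↔ a ∉ S)) :
    x ∈ I.interp (choiceConj s p q T) ↔ T = S := by
  rw [mem_interp_choiceConj]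
  have hiff : ∀ a ∈ s, x ∈ I.interp (if a ∈ T then p a else q a) ↔ (a ∈ T ↔ a ∈ S) := by
    intro a ha
    split_ifs with haT
    · simp [haT, (hx a ha).1]
    · simp [haT, (hx a ha).2]
  rw [forall₂_congr hiff, Finset.ext_iff]
  exact ⟨fun h a => ⟨fun haT => (h a (hT haT)).1 haT, fun haS => (h a (hS haS)).2 haS⟩,
    fun h a _ => h a⟩

theorem mem_tlConj_choiceConj {d : Concept Cn R} (hd : d ≠ .top) :
    d ∈ (choiceConj s p q S).tlConj ↔ ∃ a ∈ s, d ∈ (if a ∈ S then p a else q a).tlConj := by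
  simp [choiceConj, mem_tlConj_bigConj, hd]

theorem isELOver_choiceConj {cs : Set Cn} {rs : Set R} {k : ℕ}
    (h : ∀ a ∈ s, (p a).IsELOver cs rs k ∧ (q a).IsELOver cs rs k) :
    (choiceConj s p q S).IsELOver cs rs k := by
  refine isELOver_bigConj fun c hc => ?_
  obtain ⟨a, ha, rfl⟩ := List.mem_map.mp hc
  have ha := h a (Finset.mem_toList.mp ha)
  split_ifs
  exacts [ha.1, ha.2]

end ChoiceConj

theorem isModel_O₁₇_iff {n : ℕ} {I : Interp ℕ ℕ} : I.isModel (O₁₇ n) ↔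
    I.interp (.name 0) ⊆ I.interp (.disj (.name 1) (.name 2)) ∧
    I.interp (.ex 0 (.name 2)) ⊆ I.interp (.ex 0 (.conj (.name 1) cL)) ∧
    I.interp cL ⊆ I.interp (.conj
      (bigConj ((List.range n).flatMap fun i => [.name (4 + 2 * i), .name (5 + 2 * i)]))
      (.conj (.ex 1 cL) (.ex 2 cL))) := by
  simp [Interp.isModel, O₁₇]

section Omega

noncomputable def literalConj (n : ℕ) : Finset ℕ → Concept ℕ ℕ :=
  choiceConj (Finset.range n) (fun i => .name (4 + 2 * i)) (fun i => .name (5 + 2 * i))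

/-- The paper's `Ω` is `Ω n (ℓ - 1)`. -/
noncomputable def Ω (n : ℕ) : ℕ → Finset (Concept ℕ ℕ)
  | 0 => (Finset.range n).powerset.image (literalConj n)
  | k + 1 => (Ω n k).powerset.image (choiceConj (Ω n k) (.ex 1) (.ex 2))

theorem isELOver_Ω {n : ℕ} : ∀ {k : ℕ}, ∀ E ∈ Ω n k, E.IsELOver (srcNames n) {1, 2} k
  | 0, E, hE => by
    obtain ⟨S, -, rfl⟩ := Finset.mem_image.mp hE
    refine isELOver_choiceConj fun i hi => ⟨Concept.isELOver_name ?_, Concept.isELOver_name ?_⟩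
    all_goals exact show _ < 4 + 2 * n by rw [Finset.mem_range] at hi; omega
  | k + 1, E, hE => by
    obtain ⟨S, -, rfl⟩ := Finset.mem_image.mp hE
    exact isELOver_choiceConj fun X hX =>
      ⟨(isELOver_Ω X hX).ex (by simp), (isELOver_Ω X hX).ex (by simp)⟩

theorem entails_L_Ω {n : ℕ} : ∀ {k : ℕ}, ∀ E ∈ Ω n k, entails (O₁₇ n) cL E
  | 0, E, hE, I, hI, z, hz => by
    obtain ⟨S, -, rfl⟩ := Finset.mem_image.mp hE
    have hzA := (mem_interp_bigConj I _ z).mp ((isModel_O₁₇_iff.mp hI).2.2 hz).1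
    simp only [List.mem_flatMap, List.mem_range, List.mem_cons, List.not_mem_nil,
      or_false] at hzA
    refine mem_interp_choiceConj.mpr fun i hi => ?_
    have hi : i < n := Finset.mem_range.mp hi
    split_ifs
    · exact hzA _ ⟨i, hi, Or.inl rfl⟩
    · exact hzA _ ⟨i, hi, Or.inr rfl⟩
  | k + 1, E, hE, I, hI, z, hz => by
    obtain ⟨S, -, rfl⟩ := Finset.mem_image.mp hE
    obtain ⟨-, ⟨y₁, hzy₁, hy₁⟩, ⟨y₂, hzy₂, hy₂⟩⟩ := (isModel_O₁₇_iff.mp hI).2.2 hz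
    refine mem_interp_choiceConj.mpr fun X hX => ?_
    split_ifs
    · exact ⟨y₁, hzy₁, entails_L_Ω X hX I hI hy₁⟩
    · exact ⟨y₂, hzy₂, entails_L_Ω X hX I hI hy₂⟩

end Omega

section SyntacticModel
variable {a b₁ b₂ : Set (Concept ℕ ℕ)} {r : Set (Concept ℕ ℕ × Concept ℕ ℕ)}

/-- Concepts as elements: `x` lies in `Aᵢ`, `Âᵢ` or has the `rⱼ`-successor `y` iff that name
or `∃rⱼ.y` is a top-level conjunct of `x`; `A`, `B₁`, `B₂`, `r` are free and `L` is empty. -/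
abbrev synModel (a b₁ b₂ : Set (Concept ℕ ℕ)) (r : Set (Concept ℕ ℕ × Concept ℕ ℕ)) :
    Interp ℕ ℕ where
  Dom := Concept ℕ ℕ
  cI m := if m = 0 then a else if m = 1 then b₁ else if m = 2 then b₂ else
    if m = 3 then ∅ else {x | .name m ∈ x.tlConj}
  rI s := if s = 0 then r else {p | .ex s p.2 ∈ p.1.tlConj}

theorem synModel_isModel (n : ℕ) (hab : a ⊆ b₁ ∪ b₂) (hr : ∀ p ∈ r, p.2 ∉ b₂) :
    (synModel a b₁ b₂ r).isModel (O₁₇ n) := by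
  refine isModel_O₁₇_iff.mpr ⟨hab, ?_, fun _ hx => absurd hx id⟩
  rintro x ⟨y, hxy, hy⟩
  exact absurd hy (hr (x, y) hxy)

theorem mem_synModel_name {m : ℕ} (hm : 4 ≤ m) {x : Concept ℕ ℕ} :
    x ∈ (synModel a b₁ b₂ r).interp (.name m) ↔ .name m ∈ x.tlConj := by
  simp only [Interp.interp, synModel]
  rw [if_neg (by omega), if_neg (by omega), if_neg (by omega), if_neg (by omega)]
  rfl

theorem mem_synModel_ex {s : ℕ} (hs : s ≠ 0) {x c : Concept ℕ ℕ} :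
    x ∈ (synModel a b₁ b₂ r).interp (.ex s c) ↔
      ∃ y, .ex s y ∈ x.tlConj ∧ y ∈ (synModel a b₁ b₂ r).interp c := by
  simp only [Interp.interp, synModel]
  rw [if_neg hs]
  rfl

theorem name_mem_tlConj_literalConj_iff {n m : ℕ} {S : Finset ℕ} :
    .name m ∈ (literalConj n S).tlConj ↔
      ∃ j < n, j ∈ S ∧ m = 4 + 2 * j ∨ j ∉ S ∧ m = 5 + 2 * j := by
  rw [literalConj, mem_tlConj_choiceConj (by simp)]
  simp only [Finset.mem_range]
  refine exists_congr fun j => and_congr_right fun _ => ?_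
  split_ifs with hjS <;> simp [hjS, Concept.tlConj]

theorem literalConj_mem_synModel_literalConj {n : ℕ} {S T : Finset ℕ}
    (hS : S ⊆ Finset.range n) (hT : T ⊆ Finset.range n) :
    literalConj n S ∈ (synModel a b₁ b₂ r).interp (literalConj n T) ↔ T = S := by
  refine mem_interp_choiceConj_iff hS hT fun i hi => ?_
  rw [mem_synModel_name (by omega), mem_synModel_name (by omega),
    name_mem_tlConj_literalConj_iff, name_mem_tlConj_literalConj_iff]
  rw [Finset.mem_range] at hi
  grind

theorem ex_mem_tlConj_choiceConj_iff {s S : Finset (Concept ℕ ℕ)} {j : ℕ}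
    {y : Concept ℕ ℕ} : .ex j y ∈ (choiceConj s (.ex 1) (.ex 2) S).tlConj ↔
      y ∈ s ∧ (j = 1 ∧ y ∈ S ∨ j = 2 ∧ y ∉ S) := by
  rw [mem_tlConj_choiceConj (by simp)]
  constructor
  · rintro ⟨Z, hZ, h⟩
    split_ifs at h with hZS <;> simp only [Concept.tlConj, Set.mem_singleton_iff,
      Concept.ex.injEq] at h <;> obtain ⟨rfl, rfl⟩ := h <;> simp [hZ, hZS]
  · rintro ⟨hy, ⟨rfl, hyS⟩ | ⟨rfl, hyS⟩⟩ <;> exact ⟨y, hy, by simp [hyS, Concept.tlConj]⟩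

theorem choiceConj_mem_synModel_choiceConj {s S T : Finset (Concept ℕ ℕ)}
    (hs : ∀ X ∈ s, ∀ Y ∈ s, X ∈ (synModel a b₁ b₂ r).interp Y ↔ X = Y)
    (hS : S ⊆ s) (hT : T ⊆ s) :
    choiceConj s (.ex 1) (.ex 2) S ∈
      (synModel a b₁ b₂ r).interp (choiceConj s (.ex 1) (.ex 2) T) ↔ T = S := by
  refine mem_interp_choiceConj_iff hS hT fun X hX => ?_
  rw [mem_synModel_ex one_ne_zero, mem_synModel_ex two_ne_zero]
  have hsucc : ∀ P : Concept ℕ ℕ → Prop,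
      (∃ Y, (Y ∈ s ∧ P Y) ∧ Y ∈ (synModel a b₁ b₂ r).interp X) ↔ P X :=
    fun P => ⟨fun ⟨Y, ⟨hY, hPY⟩, hYX⟩ => (hs Y hY X hX).mp hYX ▸ hPY,
      fun hPX => ⟨X, ⟨hX, hPX⟩, (hs X hX X hX).mpr rfl⟩⟩
  simp only [ex_mem_tlConj_choiceConj_iff, hsucc]
  simp

variable {α : Type} {s : Finset α} {f : Finset α → Concept ℕ ℕ}

theorem injOn_of_mem_synModel_iff (a b₁ b₂ : Set (Concept ℕ ℕ))
    (r : Set (Concept ℕ ℕ × Concept ℕ ℕ))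
    (h : ∀ S ⊆ s, ∀ T ⊆ s, f S ∈ (synModel a b₁ b₂ r).interp (f T) ↔ T = S) :
    Set.InjOn f s.powerset := by
  intro S hS T hT hST
  simp only [Finset.coe_powerset, Set.mem_preimage, Set.mem_powerset_iff,
    Finset.coe_subset] at hS hT
  exact ((h S hS T hT).mp (hST ▸ (h T hT T hT).mpr rfl)).symm

theorem mem_synModel_image_powerset_iff
    (h : ∀ S ⊆ s, ∀ T ⊆ s, f S ∈ (synModel a b₁ b₂ r).interp (f T) ↔ T = S) :
    ∀ E ∈ s.powerset.image f, ∀ E' ∈ s.powerset.image f,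
      E ∈ (synModel a b₁ b₂ r).interp E' ↔ E = E' := by
  simp only [Finset.mem_image, Finset.mem_powerset]
  rintro _ ⟨S, hS, rfl⟩ _ ⟨T, hT, rfl⟩
  rw [h S hS T hT]
  exact ⟨fun hTS => hTS ▸ rfl, fun hST => injOn_of_mem_synModel_iff a b₁ b₂ r h
    (by simpa using hT) (by simpa using hS) hST.symm⟩

theorem mem_synModel_Ω_iff {n : ℕ} : ∀ {k : ℕ}, ∀ E ∈ Ω n k, ∀ E' ∈ Ω n k,
    E ∈ (synModel a b₁ b₂ r).interp E' ↔ E = E'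
  | 0 => mem_synModel_image_powerset_iff fun _ hS _ hT =>
      literalConj_mem_synModel_literalConj hS hT
  | _ + 1 => mem_synModel_image_powerset_iff fun _ hS _ hT =>
      choiceConj_mem_synModel_choiceConj mem_synModel_Ω_iff hS hT

theorem card_Ω (n : ℕ) : ∀ k, (Ω n k).card = tower (k + 1) n
  | 0 => by
    rw [Ω, Finset.card_image_of_injOn (injOn_of_mem_synModel_iff ∅ ∅ ∅ ∅ fun _ hS _ hT =>
      literalConj_mem_synModel_literalConj hS hT), Finset.card_powerset, Finset.card_range]
    rfl
  | k + 1 => by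
    rw [Ω, Finset.card_image_of_injOn (injOn_of_mem_synModel_iff ∅ ∅ ∅ ∅ fun _ hS _ hT =>
      choiceConj_mem_synModel_choiceConj mem_synModel_Ω_iff hS hT), Finset.card_powerset,
      card_Ω n k]
    rfl

end SyntacticModel

section SourceEntailments
variable {n k : ℕ} {E E' : Concept ℕ ℕ}

theorem isELOver_conj_name_Ω {m : ℕ} (hm : m < 4) (hE : E ∈ Ω n k) :
    (Concept.conj (.name m) E).IsELOver (srcNames n) srcRoles k :=
  (Concept.isELOver_name (cs := srcNames n) (show m < 4 + 2 * n by omega)).conj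
    ((isELOver_Ω E hE).mono (Set.subset_insert _ _) le_rfl)

theorem zero_notMem_roles_conj_name_Ω {m : ℕ} (hE : E ∈ Ω n k) :
    0 ∉ (Concept.conj (.name m) E).roles := fun h => by
  simpa using (isELOver_Ω E hE).2.2.1 (h.resolve_left id)

theorem entails_ex_A_ex_B₁ (hE : E ∈ Ω n k) :
    entails (O₁₇ n) (.ex 0 (.conj (.name 0) E)) (.ex 0 (.conj (.name 1) E)) := by
  rintro I hI x ⟨y, hxy, hyA, hyE⟩
  obtain ⟨hAB, hB₂L, -⟩ := isModel_O₁₇_iff.mp hI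
  rcases hAB hyA with hyB₁ | hyB₂
  · exact ⟨y, hxy, hyB₁, hyE⟩
  · obtain ⟨z, hxz, hzB₁, hzL⟩ := hB₂L ⟨y, hxy, hyB₂⟩
    exact ⟨z, hxz, hzB₁, entails_L_Ω E hE I hI hzL⟩

theorem not_entails_A_B₁ (hE : E ∈ Ω n k) :
    ¬ entails (O₁₇ n) (.conj (.name 0) E) (.conj (.name 1) E) := fun h =>
  have hmodel := synModel_isModel n (a := Set.univ) (b₁ := ∅) (b₂ := Set.univ) (r := ∅)
    (fun _ _ => Or.inr trivial) fun _ h => h.elim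
  (h _ hmodel ⟨trivial, (mem_synModel_Ω_iff E hE E hE).mpr rfl⟩).1

theorem eq_of_entails_ex_A_ex_B₁ (hE : E ∈ Ω n k) (hE' : E' ∈ Ω n k)
    (h : entails (O₁₇ n) (.ex 0 (.conj (.name 0) E)) (.ex 0 (.conj (.name 1) E'))) :
    E = E' := by
  have hmodel := synModel_isModel n (a := Set.univ) (b₁ := Set.univ) (b₂ := ∅)
    (r := {p | p.2 = E}) (fun _ _ => Or.inl trivial) fun _ _ h => h
  obtain ⟨y, hEy, -, hyE'⟩ :=
    h _ hmodel (show E ∈ _ from ⟨E, rfl, trivial, (mem_synModel_Ω_iff E hE E hE).mpr rfl⟩)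
  rw [show y = E from hEy] at hyE'
  exact (mem_synModel_Ω_iff E hE E' hE').mp hyE'

end SourceEntailments

theorem stmt17_general (n ℓ : ℕ) (hℓ : 1 ≤ ℓ)
    {N ρ : Type} (eN : ℕ → N) (eR : ℕ → ρ)
    (hiR : Function.Injective eR)
    (OT : Set (Concept N ρ × Concept N ρ)) (hfin : OT.Finite)
    (hEL : ∀ ci ∈ OT, ci.1.isEL ∧ ci.2.isEL)
    (happrox : ∀ C D : Concept ℕ ℕ, C.isEL → D.isEL →
      C.names ⊆ srcNames n → D.names ⊆ srcNames n →
      C.roles ⊆ srcRoles → D.roles ⊆ srcRoles →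
      C.depth ≤ ℓ → D.depth ≤ ℓ →
      (entails (O₁₇ n) C D ↔ entails OT (C.rename eN eR) (D.rename eN eR))) :
    tower ℓ n ≤ hfin.toFinset.sum fun ci => ci.1.size + ci.2.size := by
  obtain ⟨k, rfl⟩ : ∃ k, ℓ = k + 1 := ⟨ℓ - 1, by omega⟩
  have approx {C D : Concept ℕ ℕ} (hC : C.IsELOver (srcNames n) srcRoles (k + 1))
      (hD : D.IsELOver (srcNames n) srcRoles (k + 1)) :
      entails (O₁₇ n) C D ↔ entails OT (C.rename eN eR) (D.rename eN eR) :=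
    happrox C D hC.1 hD.1 hC.2.1 hD.2.1 hC.2.2.1 hD.2.2.1 hC.2.2.2 hD.2.2.2
  have hA {E} (hE : E ∈ Ω n k) := isELOver_conj_name_Ω (m := 0) (by omega) hE
  have hB {E} (hE : E ∈ Ω n k) := isELOver_conj_name_Ω (m := 1) (by omega) hE
  have hr₀ : 0 ∈ srcRoles := by simp [srcRoles]
  calc tower (k + 1) n = (Ω n k).card := (card_Ω n k).symm
    _ ≤ (subO OT).ncard := card_le_ncard_subO hfin
        (C := fun E => (Concept.ex 0 (.conj (.name 0) E)).rename eN eR)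
        (D := fun E => (Concept.ex 0 (.conj (.name 1) E)).rename eN eR)
        (fun E hE E' hE' h => eq_of_entails_ex_A_ex_B₁ hE hE'
          ((approx ((hA hE).ex hr₀) ((hB hE').ex hr₀)).mpr h))
        fun E hE => ?_
    _ ≤ _ := ncard_subO_le hfin
  have hr : eR 0 ∉ ((Concept.conj (.name 0) E).rename eN eR).roles := by
    rw [Concept.roles_rename, hiR.mem_set_image]
    exact zero_notMem_roles_conj_name_Ω hE
  have hpos := (approx ((hA hE).ex hr₀) ((hB hE).ex hr₀)).mp (entails_ex_A_ex_B₁ hE)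
  have hneg : ¬ entails OT ((Concept.conj (.name 0) E).rename eN eR)
      ((Concept.conj (.name 1) E).rename eN eR) := fun h =>
    not_entails_A_B₁ hE ((approx ((hA hE).mono subset_rfl k.le_succ)
      ((hB hE).mono subset_rfl k.le_succ)).mpr h)
  exact (entails_or_exists_mem_subO_of_entails_ex hEL (Concept.isEL_rename (hA hE).1)
    (Concept.isEL_rename (hB hE).1) hr hpos).resolve_left hneg

theorem stmt17 (n ℓ : ℕ) (hn : 1 ≤ n) (hℓ : 1 ≤ ℓ)
    {N ρ : Type} (eN : ℕ → N) (eR : ℕ → ρ)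
    (hiN : Function.Injective eN) (hiR : Function.Injective eR)
    (OT : Set (Concept N ρ × Concept N ρ)) (hfin : OT.Finite)
    (hEL : ∀ ci ∈ OT, ci.1.isEL ∧ ci.2.isEL)
    (happrox : ∀ C D : Concept ℕ ℕ, C.isEL → D.isEL →
      C.names ⊆ srcNames n → D.names ⊆ srcNames n →
      C.roles ⊆ srcRoles → D.roles ⊆ srcRoles →
      C.depth ≤ ℓ → D.depth ≤ ℓ →
      (entails (O₁₇ n) C D ↔ entails OT (C.rename eN eR) (D.rename eN eR))) :
    tower ℓ n ≤ hfin.toFinset.sum fun ci => ci.1.size + ci.2.size :=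
  stmt17_general n ℓ hℓ eN eR hiR OT hfin hEL happrox

end DL
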